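/- arXiv:1806.05623 — 3 statements merged into one kernel-verified Lean document; each statement's English description precedes it below -/
import Mathlib

section
/- Let A be a CCR C*-algebra and let π and τ be nonzero irreducible representations of A on complex Hilbert spaces H_π and H_τ respectively. If ker π ⊆ ker τ, then π is unitarily equivalent to τ; that is, there exists a unitary operator U : H_π → H_τ such that U π(a) = τ(a) U for all a ∈ A. -/
open scoped InnerProductSpace
open InnerProductSpace (rankOne)

/-!
Since `π(A)` consists of compact operators and contains the identity, `Hπ` is
finite-dimensional and `π` maps onto `B(Hπ)`. As `ker π ⊆ ker τ`, `τ = σ ∘ π` for a unital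
*-homomorphism `σ : B(Hπ) → B(Hτ)`. The identity lies in the ideal generated by a rank-one
projection `|e⟩⟨e|`, so `σ |e⟩⟨e| ≠ 0`; for a unit vector `f` in its range,
`V x = σ (|x⟩⟨e|) f` is an isometry intertwining `π` and `τ`, because
`(|x⟩⟨e|)* |y⟩⟨e| = ⟪x, y⟫ |e⟩⟨e|`. Its range is a nonzero closed `τ`-invariant subspace, hence
all of `Hτ`.
-/

theorem StarAlgHom.exists_comp_eq_of_surjective {R A B C : Type*} [CommRing R]
    [Ring A] [Algebra R A] [Star A] [Ring B] [Algebra R B] [Star B]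
    [Ring C] [Algebra R C] [Star C]
    (π : A →⋆ₐ[R] B) (hπ : Function.Surjective π) (τ : A →⋆ₐ[R] C)
    (hker : ∀ a, π a = 0 → τ a = 0) : ∃ σ : B →⋆ₐ[R] C, σ.comp π = τ := by
  have hτ : ∀ a, τ (Function.surjInv hπ (π a)) = τ a := fun a =>
    sub_eq_zero.mp <| by
      rw [← map_sub]
      exact hker _ (by rw [map_sub, Function.surjInv_eq hπ, sub_self])
  refine ⟨{ toFun := fun b => τ (Function.surjInv hπ b)
            map_one' := by simpa using hτ 1
            map_mul' := hπ.forall₂.2 fun a b => by simp only [← map_mul π, hτ, map_mul τ]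
            map_zero' := by simpa using hτ 0
            map_add' := hπ.forall₂.2 fun a b => by simp only [← map_add π, hτ, map_add τ]
            commutes' := fun r => by
              simp only [← AlgHomClass.commutes π r, hτ, AlgHomClass.commutes τ r]
            map_star' := hπ.forall.2 fun a => by simp only [← map_star π, hτ, map_star τ] }, ?_⟩
  ext a
  exact hτ a

def IsTopologicallyIrreducible {ι E : Type*} [NormedAddCommGroup E] [InnerProductSpace ℂ E]
    (ρ : ι → E →L[ℂ] E) : Prop :=
  ∀ S : Submodule ℂ E, IsClosed (S : Set E) → (∀ i, ∀ x ∈ S, ρ i x ∈ S) → S = ⊥ ∨ S = ⊤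

section

variable {E F : Type*} [NormedAddCommGroup E] [InnerProductSpace ℂ E]
  [NormedAddCommGroup F] [InnerProductSpace ℂ F]

theorem finiteDimensional_of_range_eq_setOf_isCompactOperator {A : Type*} [Semiring A]
    [Algebra ℂ A] [Star A] [CompleteSpace E] (ρ : A →⋆ₐ[ℂ] (E →L[ℂ] E))
    (hρ : Set.range ρ = {T : E →L[ℂ] E | IsCompactOperator T}) : FiniteDimensional ℂ E := by
  have hid : IsCompactOperator (id : E → E) := by
    have h1 : (1 : E →L[ℂ] E) ∈ Set.range ρ := ⟨1, map_one ρ⟩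
    rwa [hρ] at h1
  have := LocallyCompactSpace.of_isCompactOperator_id hid
  exact FiniteDimensional.of_locallyCompactSpace ℂ

theorem surjective_of_range_eq_setOf_isCompactOperator {A : Type*} [Semiring A]
    [Algebra ℂ A] [Star A] [CompleteSpace E] (ρ : A →⋆ₐ[ℂ] (E →L[ℂ] E))
    (hρ : Set.range ρ = {T : E →L[ℂ] E | IsCompactOperator T}) : Function.Surjective ρ := by
  have := finiteDimensional_of_range_eq_setOf_isCompactOperator ρ hρ
  intro T
  have hT : T ∈ {T : E →L[ℂ] E | IsCompactOperator T} :=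
    isCompactOperator_of_locallyCompactSpace_dom T
  rwa [← hρ] at hT

theorem ContinuousLinearMap.nontrivial_of_ne_zero {T : E →L[ℂ] F} (hT : T ≠ 0) :
    Nontrivial E := by
  obtain ⟨x, hx⟩ := T.exists_ne_zero hT
  exact nontrivial_of_ne x 0 fun h => hx (by rw [h, map_zero])

theorem IsIdempotentElem.exists_norm_eq_one_apply_eq {Q : F →L[ℂ] F} (hQ : IsIdempotentElem Q)
    (hQ0 : Q ≠ 0) : ∃ f, ‖f‖ = 1 ∧ Q f = f := by
  obtain ⟨y, hy⟩ := Q.exists_ne_zero hQ0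
  refine ⟨(‖Q y‖⁻¹ : ℂ) • Q y, norm_smul_inv_norm hy, ?_⟩
  rw [map_smul, show Q (Q y) = (Q * Q) y from rfl, hQ.eq]

theorem rankOne_mul_rankOne_self {e : E} (he : ‖e‖ = 1) (x y : E) :
    rankOne ℂ x e * rankOne ℂ e y = rankOne ℂ x y := by
  ext z
  simp [inner_self_eq_norm_sq_to_K, he]

theorem RingHom.map_rankOne_self_ne_zero [FiniteDimensional ℂ E] {B : Type*} [Ring B]
    [Nontrivial B] (σ : (E →L[ℂ] E) →+* B) {e : E} (he : ‖e‖ = 1) :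
    σ (rankOne ℂ e e) ≠ 0 := by
  intro h
  let b := stdOrthonormalBasis ℂ E
  have hsum : ∑ i, rankOne ℂ (b i) e * rankOne ℂ e e * rankOne ℂ e (b i) = 1 := by
    simp only [rankOne_mul_rankOne_self he]
    exact b.sum_rankOne_eq_id
  apply one_ne_zero (α := B)
  rw [← map_one σ, ← hsum, map_sum]
  simp [h]

theorem LinearIsometry.surjective_of_intertwining {ι : Type*} [CompleteSpace E] [Nontrivial E]
    {ρ : ι → E →L[ℂ] E} {θ : ι → F →L[ℂ] F} (hθ : IsTopologicallyIrreducible θ)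
    (V : E →ₗᵢ[ℂ] F) (hV : ∀ i x, V (ρ i x) = θ i (V x)) : Function.Surjective V := by
  have hinv : ∀ i, ∀ y ∈ LinearMap.range V.toLinearMap,
      θ i y ∈ LinearMap.range V.toLinearMap := by
    rintro i _ ⟨x, rfl⟩
    exact ⟨ρ i x, hV i x⟩
  rcases hθ _ V.isometry.isClosedEmbedding.isClosed_range hinv with h | h
  · obtain ⟨x, hx⟩ := exists_ne (0 : E)
    have hVx : V x ∈ LinearMap.range V.toLinearMap := LinearMap.mem_range_self _ x
    rw [h, Submodule.mem_bot, map_eq_zero_iff V V.injective] at hVx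
    exact absurd hVx hx
  · exact LinearMap.range_eq_top.mp h

variable [CompleteSpace E] [CompleteSpace F]

theorem StarAlgHom.inner_map_rankOne_apply (σ : (E →L[ℂ] E) →⋆ₐ[ℂ] (F →L[ℂ] F))
    {e : E} {f : F} (hf : σ (rankOne ℂ e e) f = f) (hf1 : ‖f‖ = 1) (x y : E) :
    ⟪σ (rankOne ℂ x e) f, σ (rankOne ℂ y e) f⟫_ℂ = ⟪x, y⟫_ℂ := by
  have hstar : star (rankOne ℂ x e) * rankOne ℂ y e = ⟪x, y⟫_ℂ • rankOne ℂ e e := by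
    rw [ContinuousLinearMap.star_eq_adjoint, InnerProductSpace.adjoint_rankOne]
    exact InnerProductSpace.rankOne_comp_rankOne _ _ _ _
  calc ⟪σ (rankOne ℂ x e) f, σ (rankOne ℂ y e) f⟫_ℂ
      = ⟪f, σ (star (rankOne ℂ x e) * rankOne ℂ y e) f⟫_ℂ := by
        rw [map_mul, map_star, ContinuousLinearMap.star_eq_adjoint]
        exact (ContinuousLinearMap.adjoint_inner_right _ _ _).symm
    _ = ⟪x, y⟫_ℂ := by
        rw [hstar, map_smul, smul_apply, hf, inner_smul_right,
          inner_self_eq_norm_sq_to_K, hf1]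
        simp

theorem StarAlgHom.exists_linearIsometry_intertwining [FiniteDimensional ℂ E] [Nontrivial E]
    [Nontrivial F] (σ : (E →L[ℂ] E) →⋆ₐ[ℂ] (F →L[ℂ] F)) :
    ∃ V : E →ₗᵢ[ℂ] F, ∀ S x, V (S x) = σ S (V x) := by
  obtain ⟨e, he⟩ := exists_norm_eq E zero_le_one
  obtain ⟨f, hf1, hf⟩ :=
    ((InnerProductSpace.isIdempotentElem_rankOne_self he).map σ).exists_norm_eq_one_apply_eq
      ((σ : (E →L[ℂ] E) →+* (F →L[ℂ] F)).map_rankOne_self_ne_zero he)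
  let V : E →ₗ[ℂ] F :=
    { toFun := fun x => σ (rankOne ℂ x e) f
      map_add' := by simp
      map_smul' := by simp }
  refine ⟨V.isometryOfInner (σ.inner_map_rankOne_apply hf hf1), fun S x => ?_⟩
  change σ (rankOne ℂ (S x) e) f = σ S (σ (rankOne ℂ x e) f)
  rw [← InnerProductSpace.comp_rankOne, ← ContinuousLinearMap.mul_def, map_mul]
  rfl

end

theorem ccr_rep_ker_subset_iff_unitarily_equiv_general
    {A : Type} [NormedRing A] [StarRing A]
    [NormedAlgebra ℂ A]
    -- `A` is CCR: every irreducible representation has range the compact operators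
    (hCCR : ∀ (H : Type) [NormedAddCommGroup H] [InnerProductSpace ℂ H] [CompleteSpace H]
      (ρ : A →⋆ₐ[ℂ] (H →L[ℂ] H)),
      (∀ S : Submodule ℂ H, IsClosed (S : Set H) → (∀ a, ∀ x ∈ S, ρ a x ∈ S) →
        S = ⊥ ∨ S = ⊤) →
      Set.range ρ = {T : H →L[ℂ] H | IsCompactOperator T})
    {Hπ Hτ : Type}
    [NormedAddCommGroup Hπ] [InnerProductSpace ℂ Hπ] [CompleteSpace Hπ]
    [NormedAddCommGroup Hτ] [InnerProductSpace ℂ Hτ] [CompleteSpace Hτ]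
    (π : A →⋆ₐ[ℂ] (Hπ →L[ℂ] Hπ)) (τ : A →⋆ₐ[ℂ] (Hτ →L[ℂ] Hτ))
    (hτne : ∃ a, τ a ≠ 0)
    (hπirr : ∀ S : Submodule ℂ Hπ, IsClosed (S : Set Hπ) → (∀ a, ∀ x ∈ S, π a x ∈ S) →
      S = ⊥ ∨ S = ⊤)
    (hτirr : ∀ S : Submodule ℂ Hτ, IsClosed (S : Set Hτ) → (∀ a, ∀ x ∈ S, τ a x ∈ S) →
      S = ⊥ ∨ S = ⊤)
    (hker : ∀ a : A, π a = 0 → τ a = 0) :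
    ∃ U : Hπ ≃ₗᵢ[ℂ] Hτ, ∀ (a : A) (x : Hπ), U (π a x) = τ a (U x) := by
  have hπrange := hCCR Hπ π hπirr
  have := finiteDimensional_of_range_eq_setOf_isCompactOperator π hπrange
  obtain ⟨σ, hσ⟩ := π.exists_comp_eq_of_surjective
    (surjective_of_range_eq_setOf_isCompactOperator π hπrange) τ hker
  obtain ⟨a, ha⟩ := hτne
  have := ContinuousLinearMap.nontrivial_of_ne_zero ha
  have := ContinuousLinearMap.nontrivial_of_ne_zero (mt (hker a) ha)
  obtain ⟨V, hV⟩ := σ.exists_linearIsometry_intertwining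
  have hVτ : ∀ a x, V (π a x) = τ a (V x) := fun a x => by rw [hV, ← hσ]; rfl
  exact ⟨.ofSurjective V (V.surjective_of_intertwining hτirr hVτ), hVτ⟩

/-- If `A` is a CCR C*-algebra and `π`, `τ` are nonzero irreducible
representations of `A` on complex Hilbert spaces with `ker π ⊆ ker τ`, then `π` and `τ`
are unitarily equivalent. -/
theorem ccr_rep_ker_subset_iff_unitarily_equiv
    {A : Type} [NormedRing A] [StarRing A] [CStarRing A]
    [NormedAlgebra ℂ A] [StarModule ℂ A]
    -- `A` is CCR: every irreducible representation has range the compact operators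
    (hCCR : ∀ (H : Type) [NormedAddCommGroup H] [InnerProductSpace ℂ H] [CompleteSpace H]
      (ρ : A →⋆ₐ[ℂ] (H →L[ℂ] H)),
      (∀ S : Submodule ℂ H, IsClosed (S : Set H) → (∀ a, ∀ x ∈ S, ρ a x ∈ S) →
        S = ⊥ ∨ S = ⊤) →
      Set.range ρ = {T : H →L[ℂ] H | IsCompactOperator T})
    {Hπ Hτ : Type}
    [NormedAddCommGroup Hπ] [InnerProductSpace ℂ Hπ] [CompleteSpace Hπ]
    [NormedAddCommGroup Hτ] [InnerProductSpace ℂ Hτ] [CompleteSpace Hτ]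
    (π : A →⋆ₐ[ℂ] (Hπ →L[ℂ] Hπ)) (τ : A →⋆ₐ[ℂ] (Hτ →L[ℂ] Hτ))
    (hπne : ∃ a, π a ≠ 0) (hτne : ∃ a, τ a ≠ 0)
    (hπirr : ∀ S : Submodule ℂ Hπ, IsClosed (S : Set Hπ) → (∀ a, ∀ x ∈ S, π a x ∈ S) →
      S = ⊥ ∨ S = ⊤)
    (hτirr : ∀ S : Submodule ℂ Hτ, IsClosed (S : Set Hτ) → (∀ a, ∀ x ∈ S, τ a x ∈ S) →
      S = ⊥ ∨ S = ⊤)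
    (hker : ∀ a : A, π a = 0 → τ a = 0) :
    ∃ U : Hπ ≃ₗᵢ[ℂ] Hτ, ∀ (a : A) (x : Hπ), U (π a x) = τ a (U x) :=
  ccr_rep_ker_subset_iff_unitarily_equiv_general hCCR π τ hτne hπirr hτirr hker
end

section
/- Suppose T is a bounded linear operator on L²(Y, H, μ) that commutes with M(φ) for every φ ∈ C₀(X), i.e., T M(φ) = M(φ) T for all φ ∈ C₀(X). Then T commutes with every diagonal operator: T L_ψ = L_ψ T for every bounded Borel function ψ : Y → ℂ. -/
/-!
Write `D f g` for the pointwise defect `y ↦ ⟪(T† g) y, f y⟫ - ⟪g y, (T f) y⟫ ∈ L¹(μ)`. For any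
operator `L` acting as multiplication by `s`, `T` commutes with `L` iff `∫ s • D f g = 0` for all
`f g`. Applying this to `L = M(φ)` gives `∫ (φ ∘ i) • D f g = 0` for all `φ ∈ C_c(X)`, which
forces `D f g = 0` a.e.: it suffices that `D f g` integrate to zero over every compact `K ⊆ Y`,
and `1_K` is a pointwise limit of functions `φₙ ∘ i` with `0 ≤ φₙ ≤ 1`, by Urysohn's lemma
applied to `i '' K` and the images of an exhaustion of `Kᶜ` by compact sets (disjoint from
`i '' K` since `i` is injective). Then `∫ ψ • D f g = 0` as well, so `T` commutes with `L_ψ`.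
-/

open MeasureTheory Set Filter Topology
open scoped InnerProductSpace CompactlySupported ENNReal

theorem IsOpen.isSigmaCompact {X : Type*} [TopologicalSpace X] [SecondCountableTopology X]
    [LocallyCompactSpace X] {U : Set X} (hU : IsOpen U) : IsSigmaCompact U :=
  haveI := hU.locallyCompactSpace
  isSigmaCompact_iff_sigmaCompactSpace.2 inferInstance

theorem exists_compactlySupported_one_zero_of_isCompact {X 𝕜 : Type*} [TopologicalSpace X]
    [RegularSpace X] [LocallyCompactSpace X] [RCLike 𝕜] {s t : Set X} (hs : IsCompact s)
    (ht : IsClosed t) (hd : Disjoint s t) :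
    ∃ φ : C_c(X, 𝕜), EqOn φ 1 s ∧ EqOn φ 0 t ∧ ∀ x, ‖φ x‖ ≤ 1 := by
  obtain ⟨f, hfs, hft, hfc, hf01⟩ := exists_continuous_one_zero_of_isCompact hs ht hd
  refine ⟨⟨(ContinuousMap.mk RCLike.ofReal RCLike.continuous_ofReal).comp f,
    hfc.comp_left RCLike.ofReal_zero⟩, fun x hx => ?_, fun x hx => ?_, fun x => ?_⟩
  · simp [hfs hx]
  · simp [hft hx]
  · simpa [abs_of_nonneg (hf01 x).1] using (hf01 x).2

theorem exists_seq_compactlySupported_comp_eventually_eq_indicator {X Y 𝕜 : Type*}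
    [TopologicalSpace X] [T2Space X] [LocallyCompactSpace X] [TopologicalSpace Y]
    [SecondCountableTopology Y] [LocallyCompactSpace Y] [T2Space Y] [RCLike 𝕜]
    {i : Y → X} (hi : Continuous i) (hinj : i.Injective) {K : Set Y} (hK : IsCompact K) :
    ∃ φ : ℕ → C_c(X, 𝕜), (∀ n x, ‖φ n x‖ ≤ 1) ∧
      ∀ y, ∀ᶠ n in atTop, φ n (i y) = K.indicator 1 y := by
  obtain ⟨L, hLc, hLK⟩ := hK.isClosed.isOpen_compl.isSigmaCompact
  have hsep : ∀ n, ∃ φ : C_c(X, 𝕜), EqOn φ 1 (i '' K) ∧ EqOn φ 0 (i '' accumulate L n) ∧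
      ∀ x, ‖φ x‖ ≤ 1 := fun n =>
    exists_compactlySupported_one_zero_of_isCompact (hK.image hi)
      ((isCompact_accumulate hLc n).image hi).isClosed <| by
        rw [disjoint_image_iff hinj, ← subset_compl_iff_disjoint_left, ← hLK]
        exact accumulate_subset_iUnion n
  choose φ hφK hφL hφ_le using hsep
  refine ⟨φ, hφ_le, fun y => ?_⟩
  by_cases hy : y ∈ K
  · exact Eventually.of_forall fun n => by simp [hφK n (mem_image_of_mem i hy), hy]
  · obtain ⟨N, hN⟩ := mem_iUnion.1 (hLK ▸ hy : y ∈ ⋃ n, L n)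
    filter_upwards [eventually_ge_atTop N] with n hn
    rw [hφL n (mem_image_of_mem i (mem_accumulate.2 ⟨N, hn, hN⟩)), indicator_of_notMem hy]
    rfl

theorem tendsto_integral_smul_of_eventually_eq_indicator {α 𝕜 E : Type*} [MeasurableSpace α]
    {μ : Measure α} [RCLike 𝕜] [NormedAddCommGroup E] [NormedSpace ℝ E] [NormedSpace 𝕜 E]
    {g : ℕ → α → 𝕜} {h : α → E} {s : Set α} (hs : MeasurableSet s)
    (hg_meas : ∀ n, AEStronglyMeasurable (g n) μ) (hg_le : ∀ n x, ‖g n x‖ ≤ 1)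
    (hg : ∀ x, ∀ᶠ n in atTop, g n x = s.indicator 1 x) (hh : Integrable h μ) :
    Tendsto (fun n => ∫ x, g n x • h x ∂μ) atTop (𝓝 (∫ x in s, h x ∂μ)) := by
  rw [← integral_indicator hs]
  refine tendsto_integral_of_dominated_convergence (fun x => ‖h x‖)
    (fun n => (hg_meas n).smul hh.aestronglyMeasurable) hh.norm
    (fun n => ae_of_all _ fun x => ?_) (ae_of_all _ fun x => ?_)
  · rw [norm_smul]
    exact mul_le_of_le_one_left (norm_nonneg _) (hg_le n x)
  · refine tendsto_const_nhds.congr' ((hg x).mono fun n hn => ?_)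
    by_cases hx : x ∈ s <;> simp [hn, hx]

theorem ae_eq_of_forall_integral_compactlySupported_comp_smul_eq {X Y 𝕜 E : Type*}
    [TopologicalSpace X] [T2Space X] [LocallyCompactSpace X] [TopologicalSpace Y]
    [SecondCountableTopology Y] [LocallyCompactSpace Y] [T2Space Y] [MeasurableSpace Y]
    [BorelSpace Y] {μ : Measure Y} [RCLike 𝕜] [NormedAddCommGroup E] [NormedSpace ℝ E]
    [NormedSpace 𝕜 E] [CompleteSpace E] {i : Y → X} (hi : Continuous i) (hinj : i.Injective)
    {p q : Y → E} (hp : Integrable p μ) (hq : Integrable q μ)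
    (hpq : ∀ φ : C_c(X, 𝕜), ∫ y, φ (i y) • p y ∂μ = ∫ y, φ (i y) • q y ∂μ) :
    p =ᵐ[μ] q := by
  rw [← sub_ae_eq_zero]
  refine ae_eq_zero_of_forall_setIntegral_isCompact_eq_zero (hp.sub hq) fun K hK => ?_
  obtain ⟨φ, hφ_le, hφK⟩ :=
    exists_seq_compactlySupported_comp_eventually_eq_indicator (𝕜 := 𝕜) hi hinj hK
  have hφ_meas : ∀ n, AEStronglyMeasurable (fun y => φ n (i y)) μ := fun n =>
    ((map_continuous (φ n)).comp hi).aestronglyMeasurable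
  have hlim := fun {h : Y → E} (hh : Integrable h μ) =>
    tendsto_integral_smul_of_eventually_eq_indicator hK.measurableSet hφ_meas
      (fun n y => hφ_le n (i y)) hφK hh
  have hKpq : ∫ y in K, p y ∂μ = ∫ y in K, q y ∂μ :=
    tendsto_nhds_unique ((hlim hp).congr fun n => hpq (φ n)) (hlim hq)
  rw [Pi.sub_def, integral_sub hp.integrableOn hq.integrableOn, hKpq, sub_self]

theorem exists_clm_coeFn_ae_eq_smul {α 𝕜 E : Type*} [MeasurableSpace α] {μ : Measure α}
    [NontriviallyNormedField 𝕜] [NormedAddCommGroup E] [NormedSpace 𝕜 E] {p : ℝ≥0∞}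
    [Fact (1 ≤ p)] {g : α → 𝕜} (hg : AEStronglyMeasurable g μ) {C : ℝ}
    (hC : ∀ᵐ x ∂μ, ‖g x‖ ≤ C) :
    ∃ L : Lp E p μ →L[𝕜] Lp E p μ, ∀ f, L f =ᵐ[μ] fun x => g x • f x := by
  set g' := (memLp_top_of_bound hg C hC).toLp g
  refine ⟨(ContinuousLinearMap.lsmul 𝕜 𝕜).holderL μ ⊤ p p g', fun f => ?_⟩
  filter_upwards [(ContinuousLinearMap.lsmul 𝕜 𝕜).coeFn_holder (r := p) g' f,
    MemLp.coeFn_toLp (memLp_top_of_bound hg C hC)] with x hx hg'x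
  simp [hx, hg'x, g']

section L2

variable {α 𝕜 E : Type*} [MeasurableSpace α] {μ : Measure α} [RCLike 𝕜]
  [NormedAddCommGroup E] [InnerProductSpace 𝕜 E]

theorem L2.inner_eq_integral_mul_inner_of_ae_eq_smul {u v w : Lp E 2 μ} {s : α → 𝕜}
    (hw : w =ᵐ[μ] fun x => s x • v x) :
    ⟪u, w⟫_𝕜 = ∫ x, s x * ⟪u x, v x⟫_𝕜 ∂μ := by
  rw [L2.inner_def]
  refine integral_congr_ae ?_
  filter_upwards [hw] with x hx
  rw [hx, inner_smul_right]

theorem comp_eq_comp_iff_integral_mul_inner_eq [CompleteSpace E]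
    {T L : Lp E 2 μ →L[𝕜] Lp E 2 μ} {s : α → 𝕜} (hL : ∀ f, L f =ᵐ[μ] fun x => s x • f x) :
    T ∘L L = L ∘L T ↔ ∀ f g : Lp E 2 μ,
      ∫ x, s x * ⟪(T.adjoint g) x, f x⟫_𝕜 ∂μ = ∫ x, s x * ⟪g x, (T f) x⟫_𝕜 ∂μ := by
  have hTL : ∀ f g, ⟪g, T (L f)⟫_𝕜 = ∫ x, s x * ⟪(T.adjoint g) x, f x⟫_𝕜 ∂μ := fun f g => by
    rw [← ContinuousLinearMap.adjoint_inner_left,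
      L2.inner_eq_integral_mul_inner_of_ae_eq_smul (hL f)]
  refine ContinuousLinearMap.ext_iff.trans <| forall_congr' fun f => ?_
  rw [ContinuousLinearMap.comp_apply, ContinuousLinearMap.comp_apply, ext_iff_inner_left 𝕜]
  simp only [hTL, L2.inner_eq_integral_mul_inner_of_ae_eq_smul (hL _)]

end L2

theorem commutant_of_multiplication_ops_commutes_with_diagonal_ops_general
    {X Y H : Type} [TopologicalSpace X] [LocallyCompactSpace X] [T2Space X]
    [TopologicalSpace Y] [SecondCountableTopology Y] [LocallyCompactSpace Y] [T2Space Y]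
    [MeasurableSpace Y] [BorelSpace Y]
    (μ : Measure Y)
    [NormedAddCommGroup H] [InnerProductSpace ℂ H] [CompleteSpace H]
    (i : Y → X) (hi : Continuous i) (hinj : Function.Injective i)
    (T : Lp H 2 μ →L[ℂ] Lp H 2 μ)
    (hT : ∀ (φ : ZeroAtInftyContinuousMap X ℂ) (Mφ : Lp H 2 μ →L[ℂ] Lp H 2 μ),
      (∀ f : Lp H 2 μ, (Mφ f : Y → H) =ᵐ[μ] fun y => φ (i y) • (f : Y → H) y) →
      T ∘L Mφ = Mφ ∘L T)
    (ψ : Y → ℂ)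
    (Lψ : Lp H 2 μ →L[ℂ] Lp H 2 μ)
    (hLψ : ∀ f : Lp H 2 μ, (Lψ f : Y → H) =ᵐ[μ] fun y => ψ y • (f : Y → H) y) :
    T ∘L Lψ = Lψ ∘L T := by
  have hinner_eq : ∀ f g : Lp H 2 μ,
      (fun y => ⟪(T.adjoint g) y, f y⟫_ℂ) =ᵐ[μ] fun y => ⟪g y, (T f) y⟫_ℂ := fun f g => by
    refine ae_eq_of_forall_integral_compactlySupported_comp_smul_eq (𝕜 := ℂ) hi hinj
      (L2.integrable_inner _ _) (L2.integrable_inner _ _) fun φ => ?_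
    obtain ⟨M, hM⟩ := exists_clm_coeFn_ae_eq_smul (E := H) (p := 2)
      ((map_continuous φ).comp hi).aestronglyMeasurable
      (ae_of_all μ fun y =>
        (φ : ZeroAtInftyContinuousMap X ℂ).toBCF.norm_coe_le_norm (i y))
    exact (comp_eq_comp_iff_integral_mul_inner_eq hM).1 (hT φ M hM) f g
  refine (comp_eq_comp_iff_integral_mul_inner_eq hLψ).2 fun f g => integral_congr_ae ?_
  filter_upwards [hinner_eq f g] with y hy
  rw [hy]

/-- If a bounded operator `T` on `L²(Y,H,μ)` commutes with the multiplication
operator `M(φ)` for every `φ ∈ C₀(X)`, then `T` commutes with every diagonal operator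
`L_ψ` for `ψ : Y → ℂ` bounded Borel. -/
theorem commutant_of_multiplication_ops_commutes_with_diagonal_ops
    {X Y H : Type} [TopologicalSpace X] [LocallyCompactSpace X] [T2Space X]
    [TopologicalSpace Y] [SecondCountableTopology Y] [LocallyCompactSpace Y] [T2Space Y]
    [MeasurableSpace Y] [BorelSpace Y]
    (μ : Measure Y) [μ.Regular]
    [NormedAddCommGroup H] [InnerProductSpace ℂ H] [CompleteSpace H]
    [TopologicalSpace.SeparableSpace H]
    (i : Y → X) (hi : Continuous i) (hinj : Function.Injective i)
    (T : Lp H 2 μ →L[ℂ] Lp H 2 μ)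
    (hT : ∀ (φ : ZeroAtInftyContinuousMap X ℂ) (Mφ : Lp H 2 μ →L[ℂ] Lp H 2 μ),
      (∀ f : Lp H 2 μ, (Mφ f : Y → H) =ᵐ[μ] fun y => φ (i y) • (f : Y → H) y) →
      T ∘L Mφ = Mφ ∘L T)
    (ψ : Y → ℂ) (hψ : Measurable ψ) (hbd : ∃ C : ℝ, ∀ y : Y, ‖ψ y‖ ≤ C)
    (Lψ : Lp H 2 μ →L[ℂ] Lp H 2 μ)
    (hLψ : ∀ f : Lp H 2 μ, (Lψ f : Y → H) =ᵐ[μ] fun y => ψ y • (f : Y → H) y) :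
    T ∘L Lψ = Lψ ∘L T :=
  commutant_of_multiplication_ops_commutes_with_diagonal_ops_general μ i hi hinj T hT ψ Lψ hLψ
end

section
/- If i(Y) ∩ j(Z) = ∅, then the representations M_Y and M_Z of C₀(X) have no unitarily equivalent subrepresentations; that is, there do not exist a nonzero closed subspace E ⊆ L²(Y, H_Y, μ_Y) invariant under M_Y(φ) for all φ ∈ C₀(X), a nonzero closed subspace F ⊆ L²(Z, H_Z, μ_Z) invariant under M_Z(φ) for all φ ∈ C₀(X), and a unitary operator U : E → F satisfying U (M_Y(φ)e) = M_Z(φ)(U e) for all φ ∈ C₀(X) and e ∈ E. -/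
/-!
Take `e ≠ 0` in `E` and put `f = U e`; since `U` is an isometric intertwiner,
`‖M_Y(φ) e‖ = ‖M_Z(φ) f‖` for every `φ`. Some compact `K ⊆ Y` carries a positive part of
`∫ ‖e‖²`. Urysohn functions `φₙ ∈ C₀(X)` with values in the unit disc, equal to `1` on the
compact set `i(K)` and vanishing outside its `1/(n+1)`-neighbourhood (for a compatible metric),
give `‖M_Y(φₙ) e‖² ≥ ∫_K ‖e‖² > 0`. But `j(Z)` misses `i(K)`, so `φₙ ∘ j → 0` pointwise and
`‖M_Z(φₙ) f‖ → 0` by dominated convergence.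
-/

open MeasureTheory Filter Topology Set

namespace MeasureTheory.Lp

variable {α H : Type*} [MeasurableSpace α] {μ : Measure α} [NormedAddCommGroup H]

theorem integrable_norm_sq (g : Lp H 2 μ) : Integrable (fun a => ‖(g : α → H) a‖ ^ 2) μ := by
  simpa using (Lp.memLp g).integrable_norm_rpow two_ne_zero ENNReal.ofNat_ne_top

theorem norm_sq_eq_integral (g : Lp H 2 μ) : ‖g‖ ^ 2 = ∫ a, ‖(g : α → H) a‖ ^ 2 ∂μ := by
  have hnonneg : 0 ≤ ∫ a, ‖(g : α → H) a‖ ^ 2 ∂μ := integral_nonneg fun a => by positivity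
  rw [Lp.norm_def, (Lp.memLp g).eLpNorm_eq_integral_rpow_norm two_ne_zero ENNReal.ofNat_ne_top,
    ENNReal.toReal_ofReal (by positivity)]
  simp only [ENNReal.toReal_ofNat, Real.rpow_two]
  rw [← Real.rpow_natCast, ← Real.rpow_mul hnonneg]
  norm_num

theorem norm_sq_eq_integral_of_ae_eq {g : Lp H 2 μ} {f : α → H} (h : g =ᵐ[μ] f) :
    ‖g‖ ^ 2 = ∫ a, ‖f a‖ ^ 2 ∂μ := by
  rw [norm_sq_eq_integral]
  exact integral_congr_ae (h.mono fun a ha => by simp only [ha])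

variable {𝕜 : Type*} [NormedField 𝕜] [NormedSpace 𝕜 H]

theorem setIntegral_norm_sq_le_of_ae_eq_smul {g G : Lp H 2 μ} {ψ : α → 𝕜} {K : Set α}
    (hK : MeasurableSet K) (hψ : EqOn ψ 1 K) (hG : G =ᵐ[μ] fun a => ψ a • g a) :
    ∫ a in K, ‖(g : α → H) a‖ ^ 2 ∂μ ≤ ‖G‖ ^ 2 := by
  have hint : Integrable (fun a => ‖ψ a • (g : α → H) a‖ ^ 2) μ :=
    (integrable_norm_sq G).congr (hG.mono fun a ha => by simp only [ha])
  calc ∫ a in K, ‖(g : α → H) a‖ ^ 2 ∂μ = ∫ a in K, ‖ψ a • (g : α → H) a‖ ^ 2 ∂μ :=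
        setIntegral_congr_fun hK fun a ha => by simp [hψ ha]
    _ ≤ ∫ a, ‖ψ a • (g : α → H) a‖ ^ 2 ∂μ :=
        setIntegral_le_integral hint (.of_forall fun a => by positivity)
    _ = ‖G‖ ^ 2 := (norm_sq_eq_integral_of_ae_eq hG).symm

theorem tendsto_norm_sq_zero_of_ae_eq_smul {g : Lp H 2 μ} {G : ℕ → Lp H 2 μ} {ψ : ℕ → α → 𝕜}
    (hψ : ∀ n a, ‖ψ n a‖ ≤ 1) (hψ0 : ∀ a, Tendsto (ψ · a) atTop (𝓝 0))
    (hG : ∀ n, G n =ᵐ[μ] fun a => ψ n a • g a) :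
    Tendsto (fun n => ‖G n‖ ^ 2) atTop (𝓝 0) := by
  simp_rw [norm_sq_eq_integral_of_ae_eq (hG _)]
  have hlim : ∀ a, Tendsto (fun n => ‖ψ n a • (g : α → H) a‖ ^ 2) atTop (𝓝 0) := fun a => by
    simpa using ((hψ0 a).smul_const ((g : α → H) a)).norm.pow 2
  simpa using tendsto_integral_of_dominated_convergence _
    (fun n => ((Lp.aestronglyMeasurable (G n)).congr (hG n)).norm.pow 2)
    (integrable_norm_sq g)
    (fun n => .of_forall fun a => by
      rw [Pi.pow_apply, norm_pow, norm_norm, norm_smul]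
      gcongr
      exact mul_le_of_le_one_left (norm_nonneg _) (hψ n a))
    (.of_forall hlim)

end MeasureTheory.Lp

theorem exists_isCompact_lt_setIntegral {α : Type*} [TopologicalSpace α] [SigmaCompactSpace α]
    [T2Space α] [MeasurableSpace α] [OpensMeasurableSpace α] {μ : Measure α} {f : α → ℝ}
    (hf : Integrable f μ) {c : ℝ} (hc : c < ∫ a, f a ∂μ) :
    ∃ K, IsCompact K ∧ c < ∫ a in K, f a ∂μ := by
  have hlim : Tendsto (fun n => ∫ a in compactCovering α n, f a ∂μ) atTop (𝓝 (∫ a, f a ∂μ)) := by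
    simpa [iUnion_compactCovering] using tendsto_setIntegral_of_monotone
      (fun n => (isCompact_compactCovering α n).measurableSet) (compactCovering_subset α)
      (iUnion_compactCovering α ▸ hf.integrableOn)
  obtain ⟨n, hn⟩ := (hlim.eventually (eventually_gt_nhds hc)).exists
  exact ⟨_, isCompact_compactCovering α n, hn⟩

theorem ZeroAtInftyContinuousMap.exists_eqOn_one_eqOn_zero_norm_le_one {X : Type*}
    [TopologicalSpace X] [RegularSpace X] [LocallyCompactSpace X] {S V : Set X}
    (hS : IsCompact S) (hV : IsOpen V) (hSV : S ⊆ V) :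
    ∃ φ : ZeroAtInftyContinuousMap X ℂ, EqOn φ 1 S ∧ EqOn φ 0 Vᶜ ∧ ∀ x, ‖φ x‖ ≤ 1 := by
  obtain ⟨f, hf1, hf0, hfc, hf01⟩ := exists_continuous_one_zero_of_isCompact hS
    hV.isClosed_compl (disjoint_compl_right_iff_subset.2 hSV)
  refine ⟨⟨⟨fun x => (f x : ℂ), by fun_prop⟩,
      (hfc.comp_left Complex.ofReal_zero).is_zero_at_infty⟩,
    fun x hx => by simp [hf1 hx], fun x hx => by simp [hf0 hx], fun x => ?_⟩
  simpa [abs_of_nonneg (hf01 x).1] using (hf01 x).2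

theorem ZeroAtInftyContinuousMap.exists_seq_eqOn_one_tendsto_zero {X : Type*}
    [TopologicalSpace X] [SecondCountableTopology X] [LocallyCompactSpace X] [T2Space X]
    {S : Set X} (hS : IsCompact S) :
    ∃ φ : ℕ → ZeroAtInftyContinuousMap X ℂ, (∀ n, EqOn (φ n) 1 S) ∧ (∀ n x, ‖φ n x‖ ≤ 1) ∧
      ∀ x ∉ S, Tendsto (φ · x) atTop (𝓝 0) := by
  let _ : MetricSpace X := TopologicalSpace.metrizableSpaceMetric X
  have hV n := exists_eqOn_one_eqOn_zero_norm_le_one hS Metric.isOpen_thickening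
    (Metric.self_subset_thickening (Nat.one_div_pos_of_nat (n := n)) S)
  choose φ hφ1 hφ0 hφle using hV
  refine ⟨φ, hφ1, hφle, fun x hx => tendsto_const_nhds.congr' ?_⟩
  have hfar : ∀ᶠ n : ℕ in atTop, x ∉ Metric.thickening (1 / ((n : ℝ) + 1)) S :=
    tendsto_one_div_add_atTop_nhds_zero_nat.eventually
      (Metric.eventually_notMem_thickening_of_infEDist_pos (by rwa [hS.isClosed.closure_eq]))
  exact hfar.mono fun n hn => (hφ0 n hn).symm

theorem no_unitarily_equivalent_subrepresentations_general
    {X Y Z HY HZ : Type}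
    [TopologicalSpace X] [SecondCountableTopology X] [LocallyCompactSpace X] [T2Space X]
    [TopologicalSpace Y] [SecondCountableTopology Y] [LocallyCompactSpace Y] [T2Space Y]
    [MeasurableSpace Y] [BorelSpace Y]
    [MeasurableSpace Z]
    (μY : Measure Y) (μZ : Measure Z)
    [NormedAddCommGroup HY] [InnerProductSpace ℂ HY]
    [NormedAddCommGroup HZ] [InnerProductSpace ℂ HZ]
    (i : Y → X) (hic : Continuous i)
    (j : Z → X)
    (hdisj : Set.range i ∩ Set.range j = ∅)
    (MY : ZeroAtInftyContinuousMap X ℂ → (Lp HY 2 μY →L[ℂ] Lp HY 2 μY))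
    (hMY : ∀ (φ : ZeroAtInftyContinuousMap X ℂ) (f : Lp HY 2 μY),
      (MY φ f : Y → HY) =ᵐ[μY] fun y => φ (i y) • (f : Y → HY) y)
    (MZ : ZeroAtInftyContinuousMap X ℂ → (Lp HZ 2 μZ →L[ℂ] Lp HZ 2 μZ))
    (hMZ : ∀ (φ : ZeroAtInftyContinuousMap X ℂ) (g : Lp HZ 2 μZ),
      (MZ φ g : Z → HZ) =ᵐ[μZ] fun z => φ (j z) • (g : Z → HZ) z) :
    ¬ ∃ (E : Submodule ℂ (Lp HY 2 μY)) (F : Submodule ℂ (Lp HZ 2 μZ)),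
      E ≠ ⊥ ∧ F ≠ ⊥ ∧ IsClosed (E : Set (Lp HY 2 μY)) ∧ IsClosed (F : Set (Lp HZ 2 μZ)) ∧
      ∃ (hE : ∀ (φ : ZeroAtInftyContinuousMap X ℂ), ∀ e ∈ E, MY φ e ∈ E)
        (_hF : ∀ (φ : ZeroAtInftyContinuousMap X ℂ), ∀ g ∈ F, MZ φ g ∈ F)
        (U : E ≃ₗᵢ[ℂ] F),
        ∀ (φ : ZeroAtInftyContinuousMap X ℂ) (e : E),
          (U ⟨MY φ (e : Lp HY 2 μY), hE φ e e.2⟩ : Lp HZ 2 μZ)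
            = MZ φ (U e : Lp HZ 2 μZ) := by
  rintro ⟨E, F, hE0, -, -, -, hE, -, U, hU⟩
  obtain ⟨e, heE, he0⟩ := Submodule.exists_mem_ne_zero_of_ne_bot hE0
  set f : Lp HZ 2 μZ := ↑(U ⟨e, heE⟩)
  have hnorm (φ) : ‖MY φ e‖ = ‖MZ φ f‖ := by
    rw [← hU φ ⟨e, heE⟩, ← Submodule.coe_norm, LinearIsometryEquiv.norm_map]
    rfl
  obtain ⟨K, hK, hKpos⟩ := exists_isCompact_lt_setIntegral (Lp.integrable_norm_sq e) (c := 0)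
    (by rw [← Lp.norm_sq_eq_integral]; exact pow_pos (norm_pos_iff.2 he0) 2)
  obtain ⟨φ, hφ1, hφle, hφ0⟩ :=
    ZeroAtInftyContinuousMap.exists_seq_eqOn_one_tendsto_zero (hK.image hic)
  have hlow (n) : ∫ y in K, ‖(e : Y → HY) y‖ ^ 2 ∂μY ≤ ‖MZ (φ n) f‖ ^ 2 :=
    hnorm (φ n) ▸ Lp.setIntegral_norm_sq_le_of_ae_eq_smul hK.measurableSet
      (fun y hy => hφ1 n (mem_image_of_mem i hy)) (hMY (φ n) e)
  have hj (z) : j z ∉ i '' K := fun ⟨y, _, hy⟩ =>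
    eq_empty_iff_forall_notMem.1 hdisj (j z) ⟨⟨y, hy⟩, z, rfl⟩
  have hup := Lp.tendsto_norm_sq_zero_of_ae_eq_smul (fun n z => hφle n (j z))
    (fun z => hφ0 (j z) (hj z)) (fun n => hMZ (φ n) f)
  exact hKpos.not_ge (ge_of_tendsto' hup hlow)

/-- If `i(Y) ∩ j(Z) = ∅`, then the multiplication representations `M_Y` and
`M_Z` of `C₀(X)` on `L²(Y,H_Y,μ_Y)` and `L²(Z,H_Z,μ_Z)` have no unitarily equivalent
subrepresentations. -/
theorem no_unitarily_equivalent_subrepresentations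
    {X Y Z HY HZ : Type}
    [TopologicalSpace X] [SecondCountableTopology X] [LocallyCompactSpace X] [T2Space X]
    [TopologicalSpace Y] [SecondCountableTopology Y] [LocallyCompactSpace Y] [T2Space Y]
    [MeasurableSpace Y] [BorelSpace Y]
    [TopologicalSpace Z] [SecondCountableTopology Z] [LocallyCompactSpace Z] [T2Space Z]
    [MeasurableSpace Z] [BorelSpace Z]
    (μY : Measure Y) [μY.Regular] (μZ : Measure Z) [μZ.Regular]
    [NormedAddCommGroup HY] [InnerProductSpace ℂ HY] [CompleteSpace HY]
    [TopologicalSpace.SeparableSpace HY]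
    [NormedAddCommGroup HZ] [InnerProductSpace ℂ HZ] [CompleteSpace HZ]
    [TopologicalSpace.SeparableSpace HZ]
    (i : Y → X) (hic : Continuous i) (hii : Function.Injective i)
    (j : Z → X) (hjc : Continuous j) (hji : Function.Injective j)
    (hdisj : Set.range i ∩ Set.range j = ∅)
    (MY : ZeroAtInftyContinuousMap X ℂ → (Lp HY 2 μY →L[ℂ] Lp HY 2 μY))
    (hMY : ∀ (φ : ZeroAtInftyContinuousMap X ℂ) (f : Lp HY 2 μY),
      (MY φ f : Y → HY) =ᵐ[μY] fun y => φ (i y) • (f : Y → HY) y)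
    (MZ : ZeroAtInftyContinuousMap X ℂ → (Lp HZ 2 μZ →L[ℂ] Lp HZ 2 μZ))
    (hMZ : ∀ (φ : ZeroAtInftyContinuousMap X ℂ) (g : Lp HZ 2 μZ),
      (MZ φ g : Z → HZ) =ᵐ[μZ] fun z => φ (j z) • (g : Z → HZ) z) :
    ¬ ∃ (E : Submodule ℂ (Lp HY 2 μY)) (F : Submodule ℂ (Lp HZ 2 μZ)),
      E ≠ ⊥ ∧ F ≠ ⊥ ∧ IsClosed (E : Set (Lp HY 2 μY)) ∧ IsClosed (F : Set (Lp HZ 2 μZ)) ∧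
      ∃ (hE : ∀ (φ : ZeroAtInftyContinuousMap X ℂ), ∀ e ∈ E, MY φ e ∈ E)
        (_hF : ∀ (φ : ZeroAtInftyContinuousMap X ℂ), ∀ g ∈ F, MZ φ g ∈ F)
        (U : E ≃ₗᵢ[ℂ] F),
        ∀ (φ : ZeroAtInftyContinuousMap X ℂ) (e : E),
          (U ⟨MY φ (e : Lp HY 2 μY), hE φ e e.2⟩ : Lp HZ 2 μZ)
            = MZ φ (U e : Lp HZ 2 μZ) :=
  no_unitarily_equivalent_subrepresentations_general μY μZ i hic j hdisj MY hMY MZ hMZ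
end
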